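/- arXiv:1211.3689 — 2 statements merged into one kernel-verified Lean document; each statement's English description precedes it below -/
import Mathlib

section
/- For every finite simple graph G there exists a natural number k_0 = k_0(G) such that φ^(k)(G) = φ(G) for all k ≥ k_0 (and the sequence φ^(1)(G) ≤ φ^(2)(G) ≤ ⋯ stabilizes at φ(G)). -/
open Finset

/-- `W` is a *small set* in `G`: every vertex in `W` has degree at most `n - |W|`. -/
def SimpleGraph.IsSmallSet {V : Type*} [Fintype V] (G : SimpleGraph V)
    [DecidableRel G.Adj] (W : Finset V) : Prop :=
  ∀ v ∈ W, G.degree v ≤ Fintype.card V - W.card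

/-- `W` is a *δₖ-small set* in `G`: `∑_{v ∈ W} d(v)^k ≤ |W| (n - |W|)^k`. -/
def SimpleGraph.IsDeltaSmallSet {V : Type*} [Fintype V] (G : SimpleGraph V)
    [DecidableRel G.Adj] (k : ℕ) (W : Finset V) : Prop :=
  ∑ v ∈ W, (G.degree v) ^ k ≤ W.card * (Fintype.card V - W.card) ^ k

/-- `φ(G)`: least `r` such that `V(G)` decomposes into `r` small sets. -/
noncomputable def SimpleGraph.phi {V : Type*} [Fintype V] (G : SimpleGraph V)
    [DecidableRel G.Adj] : ℕ :=
  sInf {r | ∃ f : V → Fin r, ∀ i, G.IsSmallSet (Finset.univ.filter fun v => f v = i)}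

/-- `φ⁽ᵏ⁾(G)`: least `r` such that `V(G)` decomposes into `r` δₖ-small sets. -/
noncomputable def SimpleGraph.phiDelta {V : Type*} [Fintype V] (G : SimpleGraph V)
    [DecidableRel G.Adj] (k : ℕ) : ℕ :=
  sInf {r | ∃ f : V → Fin r, ∀ i, G.IsDeltaSmallSet k (Finset.univ.filter fun v => f v = i)}

/-- `D_k(G)`: the `k`-th power mean of the degrees of `G`. -/
noncomputable def SimpleGraph.degPowerMean {V : Type*} [Fintype V] (G : SimpleGraph V)
    [DecidableRel G.Adj] (k : ℕ) : ℝ :=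
  ((∑ v, (G.degree v : ℝ) ^ k) / (Fintype.card V : ℝ)) ^ ((1 : ℝ) / k)

/-- `α⁽ᵏ⁾(G)`: the maximum size of a δₖ-small set of `G`. -/
noncomputable def SimpleGraph.alphaDelta {V : Type*} [Fintype V] (G : SimpleGraph V)
    [DecidableRel G.Adj] (k : ℕ) : ℕ :=
  sSup {m | ∃ W : Finset V, G.IsDeltaSmallSet k W ∧ W.card = m}

/-- `S(G)`: the maximum size of a small set of `G`. -/
noncomputable def SimpleGraph.maxSmallSetSize {V : Type*} [Fintype V] (G : SimpleGraph V)
    [DecidableRel G.Adj] : ℕ :=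
  sSup {m | ∃ W : Finset V, G.IsSmallSet W ∧ W.card = m}

/-- `α(G)`: the independence number of `G`. -/
noncomputable def SimpleGraph.indepNumSet {V : Type*} [Fintype V] (G : SimpleGraph V) : ℕ :=
  sSup {m | ∃ W : Finset V, (∀ v ∈ W, ∀ w ∈ W, ¬ G.Adj v w) ∧ W.card = m}

/-! A small set is δₖ-small for every `k`. Conversely, a vertex of `W` of degree at least
`n - |W| + 1` alone contributes `(n - |W| + 1)^k` to the sum, and by Bernoulli's inequality this
exceeds `|W| (n - |W|)^k` once `k > (|W| - 1)(n - |W|)`. So for `k > n²` the two notions of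
smallness coincide, and hence so do `φ⁽ᵏ⁾(G)` and `φ(G)`. -/

theorem Nat.mul_pow_lt_succ_pow {t m k : ℕ} (hk : (t - 1) * m < k) :
    t * m ^ k < (m + 1) ^ k := by
  obtain ⟨j, rfl⟩ : ∃ j, k = j + 1 := ⟨k - 1, by omega⟩
  rcases m.eq_zero_or_pos with rfl | hm
  · simp
  have bernoulli : m ^ (j + 1) + (j + 1) * m ^ j ≤ (m + 1) ^ (j + 1) := by
    simpa using pow_add_mul_le_add_pow (a := m) (b := 1) (zero_le _) (zero_le _) (j + 1)
  have hmj : 0 < m ^ j := pow_pos hm j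
  calc t * m ^ (j + 1) ≤ (1 + (t - 1)) * m ^ (j + 1) := by gcongr; omega
    _ = m ^ (j + 1) + (t - 1) * m * m ^ j := by ring
    _ < m ^ (j + 1) + (j + 1) * m ^ j := by gcongr
    _ ≤ (m + 1) ^ (j + 1) := bernoulli

namespace SimpleGraph

variable {V : Type*} [Fintype V] (G : SimpleGraph V) [DecidableRel G.Adj]

theorem IsSmallSet.isDeltaSmallSet {W : Finset V} (h : G.IsSmallSet W) (k : ℕ) :
    G.IsDeltaSmallSet k W :=
  calc ∑ v ∈ W, G.degree v ^ k ≤ ∑ _v ∈ W, (Fintype.card V - #W) ^ k :=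
        sum_le_sum fun v hv => Nat.pow_le_pow_left (h v hv) k
    _ = #W * (Fintype.card V - #W) ^ k := by rw [sum_const, smul_eq_mul]

theorem IsDeltaSmallSet.isSmallSet {W : Finset V} {k : ℕ} (h : G.IsDeltaSmallSet k W)
    (hk : (#W - 1) * (Fintype.card V - #W) < k) : G.IsSmallSet W := by
  intro v hv
  by_contra! hdeg
  have hle := calc (Fintype.card V - #W + 1) ^ k ≤ G.degree v ^ k := Nat.pow_le_pow_left hdeg k
    _ ≤ ∑ w ∈ W, G.degree w ^ k := single_le_sum (f := (G.degree · ^ k)) (by simp) hv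
    _ ≤ #W * (Fintype.card V - #W) ^ k := h
  exact hle.not_gt (Nat.mul_pow_lt_succ_pow hk)

theorem isDeltaSmallSet_iff_isSmallSet {k : ℕ} (hk : Fintype.card V ^ 2 < k) (W : Finset V) :
    G.IsDeltaSmallSet k W ↔ G.IsSmallSet W := by
  refine ⟨fun h => h.isSmallSet G ?_, fun h => h.isDeltaSmallSet G k⟩
  have hW : #W ≤ Fintype.card V := card_le_univ W
  calc (#W - 1) * (Fintype.card V - #W) ≤ Fintype.card V * Fintype.card V := by gcongr <;> omega
    _ < k := by rwa [← sq]

theorem phiDelta_eq_phi {k : ℕ} (hk : Fintype.card V ^ 2 < k) : G.phiDelta k = G.phi := by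
  simp only [phiDelta, phi, G.isDeltaSmallSet_iff_isSmallSet hk]

end SimpleGraph

theorem stmt_6 {V : Type*} [Fintype V] (G : SimpleGraph V) [DecidableRel G.Adj] :
    ∃ k₀ : ℕ, ∀ k, k₀ ≤ k → G.phiDelta k = G.phi :=
  ⟨Fintype.card V ^ 2 + 1, fun _ hk => G.phiDelta_eq_phi hk⟩
end

section
/- Let G be a finite simple graph on n ≥ 1 vertices. Then for every natural number s ≥ 3, φ^(s)(G) ≥ n/(n − D_3(G)). -/
open Finset

/-- `α(G)`: the independence number of `G`. -/
noncomputable def SimpleGraph.indepNumSSup {V : Type*} [Fintype V] (G : SimpleGraph V) : ℕ :=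
  sSup {m | ∃ W : Finset V, (∀ v ∈ W, ∀ w ∈ W, ¬ G.Adj v w) ∧ W.card = m}


/-! Inside a δₛ-small class `W` the `s`-th power mean of the degrees is at most `n - |W|`, hence so
is the cubic mean for `s ≥ 3`. Summing over the classes of an optimal partition into `r` parts of
sizes `aᵢ` gives `∑ d(v)³ ≤ ∑ aᵢ (n - aᵢ)³`, and this is at most `n (n - n/r)³`, attained at equal
sizes: for `r ≥ 3` each term lies below the tangent of `a ↦ a (n - a)³` at `n/r`. Thus
`D₃(G) ≤ n - n/r`, which rearranges to the claim. -/

theorem Finset.sum_pow_le_card_mul_pow_of_le {ι : Type*} {W : Finset ι} {x : ι → ℝ} {c : ℝ}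
    (hx : ∀ i ∈ W, 0 ≤ x i) (hc : 0 ≤ c) {k s : ℕ} (hk : k ≠ 0) (hks : k ≤ s)
    (h : ∑ i ∈ W, x i ^ s ≤ #W * c ^ s) :
    ∑ i ∈ W, x i ^ k ≤ #W * c ^ k := by
  obtain rfl | hW := W.eq_empty_or_nonempty
  · simp
  have hcard : (0 : ℝ) < #W := by exact_mod_cast hW.card_pos
  set p : ℝ := s / k
  have hk' : (0 : ℝ) < k := by exact_mod_cast Nat.pos_of_ne_zero hk
  have hp : 1 ≤ p := by rw [one_le_div hk']; exact_mod_cast hks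
  have pow_rpow : ∀ y : ℝ, 0 ≤ y → (y ^ k) ^ p = y ^ s := fun y hy => by
    rw [← Real.rpow_natCast y k, ← Real.rpow_mul hy, mul_div_cancel₀ _ hk'.ne', Real.rpow_natCast]
  have jensen := Real.rpow_arith_mean_le_arith_mean_rpow W (fun _ => (#W : ℝ)⁻¹)
    (fun i => x i ^ k) (fun _ _ => by positivity)
    (by rw [sum_const, nsmul_eq_mul, mul_inv_cancel₀ hcard.ne'])
    (fun i hi => pow_nonneg (hx i hi) k) hp
  simp only [← mul_sum] at jensen
  rw [sum_congr rfl fun i hi => pow_rpow (x i) (hx i hi)] at jensen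
  have hmean : ((#W : ℝ)⁻¹ * ∑ i ∈ W, x i ^ k) ^ p ≤ (c ^ k) ^ p := by
    rw [pow_rpow c hc]
    exact jensen.trans (by rwa [inv_mul_le_iff₀ hcard])
  have hsum_nonneg : 0 ≤ (#W : ℝ)⁻¹ * ∑ i ∈ W, x i ^ k :=
    mul_nonneg (by positivity) (sum_nonneg fun i hi => pow_nonneg (hx i hi) k)
  have := (Real.rpow_le_rpow_iff hsum_nonneg (by positivity) (by positivity)).1 hmean
  rwa [inv_mul_le_iff₀ hcard] at this

/-- The bracket is the derivative of `a ↦ a (n - a)³` at `m`. -/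
theorem mul_sub_pow_three_le_tangent {n m a : ℝ} (ha : 0 ≤ a) (han : a ≤ n)
    (hmn : 3 * m ≤ n) :
    a * (n - a) ^ 3 ≤ m * (n - m) ^ 3 + ((n - m) ^ 3 - 3 * m * (n - m) ^ 2) * (a - m) := by
  have h₁ : 0 ≤ (n - a) * (2 * n - 2 * m - a) := mul_nonneg (by linarith) (by linarith)
  have h₂ : 0 ≤ (n - m) * (n - 3 * m) := mul_nonneg (by linarith) (by linarith)
  linear_combination mul_nonneg (sq_nonneg (a - m)) (add_nonneg h₁ h₂)

theorem sum_mul_sub_pow_three_le {r : ℕ} {n : ℝ} (a : Fin r → ℝ) (ha : ∀ i, 0 ≤ a i)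
    (hsum : ∑ i, a i = n) :
    ∑ i, a i * (n - a i) ^ 3 ≤ n * (n - n / r) ^ 3 := by
  have han : ∀ i, a i ≤ n := fun i => hsum ▸ single_le_sum (fun j _ => ha j) (mem_univ i)
  match r, a, ha, hsum, han with
  | 0, a, _, hsum, _ =>
    simp only [univ_eq_empty, sum_empty] at hsum ⊢
    simp [← hsum]
  | 1, a, _, hsum, _ =>
    simp only [Fin.sum_univ_one] at hsum ⊢
    simp [hsum]
  | 2, a, ha, hsum, _ =>
    rw [Fin.sum_univ_two] at hsum ⊢
    subst hsum
    have hquartic := pow_nonneg (sq_nonneg (a 0 - a 1)) 2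
    push_cast
    linear_combination hquartic / 8
  | k + 3, a, ha, hsum, han =>
    have hr : (3 : ℝ) ≤ (k + 3 : ℕ) := by exact_mod_cast Nat.le_add_left 3 k
    set m : ℝ := n / (k + 3 : ℕ)
    have hrm : (k + 3 : ℕ) * m = n := mul_div_cancel₀ n (by positivity)
    have hm : 0 ≤ m := div_nonneg (hsum ▸ sum_nonneg fun i _ => ha i) (by positivity)
    calc ∑ i, a i * (n - a i) ^ 3
        ≤ ∑ i, (m * (n - m) ^ 3 + ((n - m) ^ 3 - 3 * m * (n - m) ^ 2) * (a i - m)) :=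
          sum_le_sum fun i _ => mul_sub_pow_three_le_tangent (ha i) (han i) (by nlinarith)
      _ = (k + 3 : ℕ) * (m * (n - m) ^ 3)
            + ((n - m) ^ 3 - 3 * m * (n - m) ^ 2) * (∑ i, a i - (k + 3 : ℕ) * m) := by
          simp only [sum_add_distrib, ← mul_sum, sum_sub_distrib, sum_const, card_univ,
            Fintype.card_fin, nsmul_eq_mul]
          ring
      _ = n * (n - m) ^ 3 := by rw [hsum]; linear_combination (3 * m * (n - m) ^ 2) * hrm

namespace SimpleGraph

variable {V : Type*} [Fintype V] {G : SimpleGraph V} [DecidableRel G.Adj]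

theorem IsDeltaSmallSet.of_le {W : Finset V} {k s : ℕ} (h : G.IsDeltaSmallSet s W) (hk : k ≠ 0)
    (hks : k ≤ s) : G.IsDeltaSmallSet k W := by
  have hreal : ∑ v ∈ W, (G.degree v : ℝ) ^ s ≤ #W * ((Fintype.card V - #W : ℕ) : ℝ) ^ s := by
    exact_mod_cast h
  have := sum_pow_le_card_mul_pow_of_le (fun v _ => Nat.cast_nonneg _) (Nat.cast_nonneg _) hk hks
    hreal
  exact_mod_cast this

variable (G)

theorem isDeltaSmallSet_of_card_le_one {W : Finset V} (hW : #W ≤ 1) (k : ℕ) :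
    G.IsDeltaSmallSet k W :=
  calc ∑ v ∈ W, G.degree v ^ k
      ≤ ∑ _v ∈ W, (Fintype.card V - 1) ^ k :=
        sum_le_sum fun v _ =>
          Nat.pow_le_pow_left (Nat.le_sub_one_of_lt (G.degree_lt_card_verts v)) k
    _ = #W * (Fintype.card V - 1) ^ k := by rw [sum_const, smul_eq_mul]
    _ ≤ #W * (Fintype.card V - #W) ^ k := by gcongr

theorem exists_partition_isDeltaSmallSet (k : ℕ) :
    ∃ f : V → Fin (G.phiDelta k), ∀ i, G.IsDeltaSmallSet k {v | f v = i} := by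
  have hsingletons : ∃ f : V → Fin (Fintype.card V), ∀ i, G.IsDeltaSmallSet k {v | f v = i} := by
    refine ⟨Fintype.equivFin V, fun i => G.isDeltaSmallSet_of_card_le_one
      (card_le_one.2 fun x hx y hy => ?_) k⟩
    simp only [mem_filter, mem_univ, true_and] at hx hy
    exact (Fintype.equivFin V).injective (hx.trans hy.symm)
  exact Nat.sInf_mem (s := {r | ∃ f : V → Fin r, ∀ i, G.IsDeltaSmallSet k {v | f v = i}})
    ⟨_, hsingletons⟩

theorem degPowerMean_le_of_sum_pow_le {k : ℕ} (hk : k ≠ 0) {c : ℝ} (hc : 0 ≤ c)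
    (h : ∑ v, (G.degree v : ℝ) ^ k ≤ (Fintype.card V : ℝ) * c ^ k) : G.degPowerMean k ≤ c := by
  have hmean : (∑ v, (G.degree v : ℝ) ^ k) / Fintype.card V ≤ c ^ k :=
    div_le_of_le_mul₀ (Nat.cast_nonneg _) (by positivity) (by rwa [mul_comm])
  calc G.degPowerMean k ≤ (c ^ k) ^ ((1 : ℝ) / k) :=
        Real.rpow_le_rpow (by positivity) hmean (by positivity)
    _ = c := by rw [one_div, Real.pow_rpow_inv_natCast hc hk]

theorem degPowerMean_three_le {r : ℕ} (f : V → Fin r)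
    (hf : ∀ i, G.IsDeltaSmallSet 3 {v | f v = i}) :
    G.degPowerMean 3 ≤ Fintype.card V - Fintype.card V / r := by
  set n : ℝ := (Fintype.card V : ℝ)
  set a : Fin r → ℝ := fun i => #{v | f v = i}
  have hasum : ∑ i, a i = n := by
    simp only [a, n, ← Nat.cast_sum, ← card_eq_sum_card_fiberwise fun v _ => mem_univ (f v),
      card_univ]
  have hclass : ∀ i, ∑ v with f v = i, (G.degree v : ℝ) ^ 3 ≤ a i * (n - a i) ^ 3 := fun i => by
    have hle : #{v | f v = i} ≤ Fintype.card V := card_le_univ _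
    have := (Nat.cast_le (α := ℝ)).2 (hf i)
    push_cast [Nat.cast_sub hle] at this
    exact this
  have hnr : n / r ≤ n := div_nat_le_self_of_nonnneg (Nat.cast_nonneg _) r
  refine G.degPowerMean_le_of_sum_pow_le three_ne_zero (by linarith) ?_
  calc ∑ v, (G.degree v : ℝ) ^ 3 = ∑ i, ∑ v with f v = i, (G.degree v : ℝ) ^ 3 :=
        (sum_fiberwise univ f _).symm
    _ ≤ ∑ i, a i * (n - a i) ^ 3 := sum_le_sum fun i _ => hclass i
    _ ≤ n * (n - n / r) ^ 3 := sum_mul_sub_pow_three_le a (fun i => Nat.cast_nonneg _) hasum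

end SimpleGraph

theorem stmt_13_general {V : Type*} [Fintype V] (G : SimpleGraph V) [DecidableRel G.Adj]
    (s : ℕ) (hs : 3 ≤ s) :
    (G.phiDelta s : ℝ) ≥
      (Fintype.card V : ℝ) / ((Fintype.card V : ℝ) - G.degPowerMean 3) := by
  rcases isEmpty_or_nonempty V with _ | _
  · simp
  obtain ⟨f, hf⟩ := G.exists_partition_isDeltaSmallSet s
  have hr : (0 : ℝ) < G.phiDelta s := by exact_mod_cast Fin.pos (f (Classical.arbitrary V))
  have hD := G.degPowerMean_three_le f fun i => (hf i).of_le three_ne_zero hs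
  have hgap : Fintype.card V / (G.phiDelta s : ℝ) ≤ Fintype.card V - G.degPowerMean 3 := by
    linarith
  rw [ge_iff_le, div_le_iff₀ (lt_of_lt_of_le (by positivity) hgap), ← div_le_iff₀' hr]
  exact hgap

theorem stmt_13 {V : Type*} [Fintype V] (G : SimpleGraph V) [DecidableRel G.Adj]
    (hn : 1 ≤ Fintype.card V) (s : ℕ) (hs : 3 ≤ s) :
    (G.phiDelta s : ℝ) ≥
      (Fintype.card V : ℝ) / ((Fintype.card V : ℝ) - G.degPowerMean 3) :=
  stmt_13_general G s hs
end
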